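/- arXiv:2308.15147 — 9 statements merged into one kernel-verified Lean document; each statement's English description precedes it below -/
import Mathlib

section
/- Let V⁺ ⊆ 𝕋V be a subspace with dim V⁺ = dim V on which the hyperbolic pairing is positive definite (a fibrewise generalised metric). Then there exists a unique pair (g, b) of bilinear forms on V, with g symmetric and positive definite and b alternating, such that V⁺ = gr(g + b). Conversely, for any such pair (g, b), the hyperbolic pairing is positive definite on gr(g + b) and dim gr(g + b) = dim V. -/
/-- The hyperbolic pairing on the double `𝕋V = V × V*`:
`⟨(v, α), (w, β)⟩ = α(w) + β(v)`. -/
noncomputable def hyp (V : Type*) [AddCommGroup V] [Module ℝ V] :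
    LinearMap.BilinForm ℝ (V × Module.Dual ℝ V) :=
  LinearMap.mk₂ ℝ (fun x y => x.2 y.1 + y.2 x.1)
    (fun x x' y => by
      simp only [Prod.fst_add, Prod.snd_add, LinearMap.add_apply, map_add]; ring)
    (fun c x y => by
      simp only [Prod.smul_fst, Prod.smul_snd, LinearMap.smul_apply, map_smul, smul_eq_mul]; ring)
    (fun x y y' => by
      simp only [Prod.fst_add, Prod.snd_add, LinearMap.add_apply, map_add]; ring)
    (fun c x y => by
      simp only [Prod.smul_fst, Prod.smul_snd, LinearMap.smul_apply, map_smul, smul_eq_mul]; ring)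

/-!
On a graph `gr f` the hyperbolic pairing is `⟨(v, f v), (v, f v)⟩ = 2 f(v, v)`, which only sees
the symmetric part of `f`; and a subspace on which the pairing is definite meets `0 × V*`
(where it vanishes) trivially, so it projects isomorphically onto `V` once it has dimension
`dim V`, i.e. it is a graph. The theorem then reduces to the unique splitting of a bilinear
form into a symmetric and an alternating part.
-/

namespace LinearMap

section Graph

variable {R M N : Type*} [Semiring R] [AddCommMonoid M] [Module R M] [AddCommMonoid N]
  [Module R N]

theorem graph_injective : Function.Injective (graph : (M →ₗ[R] N) → Submodule R (M × N)) :=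
  fun f g h => ext fun v => (h ▸ rfl : (v, f v) ∈ graph g)

theorem forall_mem_graph_iff (f : M →ₗ[R] N) {P : M × N → Prop} :
    (∀ x ∈ graph f, P x) ↔ ∀ v, P (v, f v) := by
  refine ⟨fun h v => h _ rfl, fun h x hx => ?_⟩
  rw [mem_graph_iff f] at hx
  simpa [← hx] using h x.1

theorem finrank_graph [StrongRankCondition R] (f : M →ₗ[R] N) :
    Module.finrank R (graph f) = Module.finrank R M := by
  rw [graph_eq_range_prod]
  exact finrank_range_of_inj fun _ _ h => congrArg Prod.fst h

end Graph

namespace BilinForm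

variable {R M : Type*} [CommRing R] [Invertible (2 : R)] [AddCommGroup M] [Module R M]

theorem existsUnique_symm_add_isAlt (f : LinearMap.BilinForm R M) :
    ∃! p : LinearMap.BilinForm R M × LinearMap.BilinForm R M,
      (∀ v w, p.1 v w = p.1 w v) ∧ p.2.IsAlt ∧ p.1 + p.2 = f := by
  have two : ⅟(2 : R) * 2 = 1 := invOf_mul_self 2
  refine ⟨(⅟(2 : R) • (f + f.flip), ⅟(2 : R) • (f - f.flip)), ⟨fun v w => ?_, fun v => ?_, ?_⟩, ?_⟩
  · simp only [smul_apply, add_apply, flip_apply, smul_eq_mul, add_comm]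
  · simp only [smul_apply, sub_apply, flip_apply, sub_self, smul_zero]
  · ext v w
    simp only [add_apply, smul_apply, sub_apply, flip_apply, smul_eq_mul]
    linear_combination (f v w) * two
  · rintro ⟨g, b⟩ ⟨hg, hb, rfl⟩
    have hb' : ∀ v w, b w v = -b v w := fun v w => (IsAlt.neg_eq hb v w).symm
    ext v w <;> simp only [add_apply, smul_apply, sub_apply, flip_apply, smul_eq_mul]
    · linear_combination (-g v w) * two + ⅟2 * hg v w - ⅟2 * hb' v w
    · linear_combination (-b v w) * two - ⅟2 * hg v w + ⅟2 * hb' v w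

end BilinForm

end LinearMap

section Hyperbolic

variable {V : Type*} [AddCommGroup V] [Module ℝ V]

theorem hyp_apply (x y : V × Module.Dual ℝ V) : hyp V x y = x.2 y.1 + y.2 x.1 := rfl

theorem hyp_self_graph (f : LinearMap.BilinForm ℝ V) (v : V) :
    hyp V (v, f v) (v, f v) = 2 * f v v := by
  rw [hyp_apply]; ring

theorem hyp_pos_on_graph_iff {g b : LinearMap.BilinForm ℝ V} (hb : b.IsAlt) :
    (∀ x ∈ LinearMap.graph (g + b), x ≠ 0 → 0 < hyp V x x) ↔ ∀ v : V, v ≠ 0 → 0 < g v v := by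
  rw [LinearMap.forall_mem_graph_iff]
  refine forall_congr' fun v => ?_
  rw [hyp_self_graph, LinearMap.add_apply, LinearMap.add_apply, hb v, add_zero]
  have hne : (v, g v + b v) ≠ 0 ↔ v ≠ 0 := by
    refine not_congr ⟨congrArg Prod.fst, fun hv => ?_⟩
    simp [hv]
  rw [hne, mul_pos_iff_of_pos_left two_pos]

theorem fst_injective_of_hyp_pos {W : Submodule ℝ (V × Module.Dual ℝ V)}
    (hpos : ∀ x ∈ W, x ≠ 0 → 0 < hyp V x x) : Function.Injective (Prod.fst ∘ W.subtype) := by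
  intro x y hxy
  have hmem : (x - y : V × Module.Dual ℝ V) ∈ W := W.sub_mem x.2 y.2
  have hfst : (x - y : V × Module.Dual ℝ V).1 = 0 := sub_eq_zero.2 hxy
  refine Subtype.ext (sub_eq_zero.1 ?_)
  by_contra hne
  exact (hpos _ hmem hne).ne' (by simp only [hyp_apply, hfst, map_zero, add_zero])

theorem exists_eq_graph_of_hyp_pos [FiniteDimensional ℝ V] {W : Submodule ℝ (V × Module.Dual ℝ V)}
    (hdim : Module.finrank ℝ W = Module.finrank ℝ V) (hpos : ∀ x ∈ W, x ≠ 0 → 0 < hyp V x x) :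
    ∃ f : LinearMap.BilinForm ℝ V, W = LinearMap.graph f := by
  have hinj := fst_injective_of_hyp_pos hpos
  refine Submodule.exists_eq_graph ⟨hinj, ?_⟩
  exact (@LinearMap.injective_iff_surjective_of_finrank_eq_finrank ℝ W _ _ _ V _ _ _ _ hdim
    (LinearMap.fst ℝ V (Module.Dual ℝ V) ∘ₗ W.subtype)).1 hinj

end Hyperbolic

/-- A subspace `V⁺ ⊆ 𝕋V` with `dim V⁺ = dim V` on which the hyperbolic pairing is positive
definite is the graph `gr(g + b)` of a unique pair `(g, b)` with `g` symmetric positive definite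
and `b` alternating; conversely every such graph is a fibrewise generalised metric. -/
theorem stmt0 (V : Type*) [AddCommGroup V] [Module ℝ V] [FiniteDimensional ℝ V] :
    (∀ W : Submodule ℝ (V × Module.Dual ℝ V),
        Module.finrank ℝ W = Module.finrank ℝ V →
        (∀ x ∈ W, x ≠ 0 → 0 < hyp V x x) →
        ∃! p : LinearMap.BilinForm ℝ V × LinearMap.BilinForm ℝ V,
          (∀ v w, p.1 v w = p.1 w v) ∧ (∀ v : V, v ≠ 0 → 0 < p.1 v v) ∧
          (∀ v, p.2 v v = 0) ∧
          W = LinearMap.graph (p.1 + p.2)) ∧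
    (∀ g b : LinearMap.BilinForm ℝ V,
        (∀ v w, g v w = g w v) → (∀ v : V, v ≠ 0 → 0 < g v v) → (∀ v, b v v = 0) →
        (∀ x ∈ LinearMap.graph (g + b), x ≠ 0 → 0 < hyp V x x) ∧
        Module.finrank ℝ (LinearMap.graph (g + b)) = Module.finrank ℝ V) := by
  refine ⟨fun W hdim hpos => ?_, fun g b _ hg hb =>
    ⟨(hyp_pos_on_graph_iff hb).2 hg, LinearMap.finrank_graph _⟩⟩
  obtain ⟨f, rfl⟩ := exists_eq_graph_of_hyp_pos hdim hpos
  obtain ⟨p, ⟨hsymm, halt, hsum⟩, huniq⟩ := LinearMap.BilinForm.existsUnique_symm_add_isAlt f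
  rw [← hsum] at hpos
  refine ⟨p, ⟨hsymm, (hyp_pos_on_graph_iff halt).1 hpos, halt, congrArg _ hsum.symm⟩, ?_⟩
  rintro q ⟨hsymm', -, halt', hq⟩
  exact huniq q ⟨hsymm', halt', (LinearMap.graph_injective hq).symm⟩
end

section
/- For any symmetric bilinear form g and any alternating bilinear form b on V, the orthogonal complement of gr(g + b) in 𝕋V with respect to the hyperbolic pairing equals gr(−g + b). -/
/-- For a symmetric bilinear form `g` and an alternating bilinear form `b` on `V`, the
orthogonal complement of `gr(g + b)` in `𝕋V` with respect to the hyperbolic pairing equals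
`gr(−g + b)`. -/
theorem stmt1 (V : Type*) [AddCommGroup V] [Module ℝ V] [FiniteDimensional ℝ V]
    (g b : LinearMap.BilinForm ℝ V)
    (hg : ∀ v w, g v w = g w v) (hb : ∀ v, b v v = 0) :
    LinearMap.BilinForm.orthogonal (hyp V) (LinearMap.graph (g + b))
      = LinearMap.graph (-g + b) := by
  have hb' : ∀ v w, b v w = - b w v := by
    intro v w
    have h := hb (v + w)
    simp only [map_add, LinearMap.add_apply, hb] at h
    linarith
  ext x
  obtain ⟨w, β⟩ := x
  constructor
  · intro h
    rw [LinearMap.mem_graph_iff]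
    ext v
    have hv : ((v, (g + b) v) : V × Module.Dual ℝ V) ∈ LinearMap.graph (g + b) := by
      rw [LinearMap.mem_graph_iff]
    have := h (v, (g + b) v) hv
    simp only [hyp, LinearMap.BilinForm.IsOrtho, LinearMap.mk₂_apply,
      LinearMap.add_apply, LinearMap.neg_apply] at this ⊢
    have h1 := hg v w
    have h2 := hb' v w
    linarith
  · intro h
    rw [LinearMap.mem_graph_iff] at h
    intro y hy
    obtain ⟨v, α⟩ := y
    rw [LinearMap.mem_graph_iff] at hy
    simp only at hy
    subst hy
    simp only [hyp, LinearMap.BilinForm.IsOrtho, LinearMap.mk₂_apply]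
    simp only at h
    have hβ : β v = (-g + b) w v := by rw [h]
    simp only [LinearMap.add_apply, LinearMap.neg_apply] at hβ ⊢
    rw [hβ, hg v w, hb' v w]
    ring
end

section
/- Let (E₁, B₁) and (E₂, B₂) be finite-dimensional real vector spaces with nondegenerate symmetric bilinear forms, equipped with generalised metrics τ₁ and τ₂ respectively. Let R ⊆ E₁ × E₂ be a subspace that is isotropic with respect to the pairing ⟨(e₁, e₂), (e₁', e₂')⟩ = B₁(e₁, e₁') − B₂(e₂, e₂') and invariant under τ₁ × τ₂, i.e. (τ₁ × τ₂)(R) = R. Then R ∩ (E₁ × {0}) = {0} and R ∩ ({0} × E₂) = {0}. -/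
/-- A subspace `R ⊆ E₁ × E₂` isotropic for the difference pairing and invariant under the
product of two generalised metrics meets `E₁ × {0}` and `{0} × E₂` trivially. -/
theorem stmt4 (E₁ E₂ : Type*) [AddCommGroup E₁] [Module ℝ E₁] [FiniteDimensional ℝ E₁]
    [AddCommGroup E₂] [Module ℝ E₂] [FiniteDimensional ℝ E₂]
    (B₁ : LinearMap.BilinForm ℝ E₁) (B₂ : LinearMap.BilinForm ℝ E₂)
    (hB₁symm : ∀ e e', B₁ e e' = B₁ e' e) (hB₁nd : LinearMap.BilinForm.Nondegenerate B₁)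
    (hB₂symm : ∀ e e', B₂ e e' = B₂ e' e) (hB₂nd : LinearMap.BilinForm.Nondegenerate B₂)
    (τ₁ : E₁ →ₗ[ℝ] E₁) (hτ₁inv : τ₁ ∘ₗ τ₁ = LinearMap.id)
    (hG₁symm : ∀ e e', B₁ e (τ₁ e') = B₁ e' (τ₁ e))
    (hG₁pos : ∀ e : E₁, e ≠ 0 → 0 < B₁ e (τ₁ e))
    (τ₂ : E₂ →ₗ[ℝ] E₂) (hτ₂inv : τ₂ ∘ₗ τ₂ = LinearMap.id)
    (hG₂symm : ∀ e e', B₂ e (τ₂ e') = B₂ e' (τ₂ e))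
    (hG₂pos : ∀ e : E₂, e ≠ 0 → 0 < B₂ e (τ₂ e))
    (R : Submodule ℝ (E₁ × E₂))
    (hiso : ∀ x ∈ R, ∀ y ∈ R, B₁ x.1 y.1 - B₂ x.2 y.2 = 0)
    (hR : Submodule.map (τ₁.prodMap τ₂) R = R) :
    (∀ e₁ : E₁, (e₁, (0 : E₂)) ∈ R → e₁ = 0) ∧
    (∀ e₂ : E₂, ((0 : E₁), e₂) ∈ R → e₂ = 0) := by
  constructor
  · intro e₁ h
    by_contra hne
    have hmem : (τ₁ e₁, (0 : E₂)) ∈ R := by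
      rw [← hR]
      refine ⟨(e₁, 0), h, ?_⟩
      simp [LinearMap.prodMap_apply]
    have := hiso (e₁, 0) h (τ₁ e₁, 0) hmem
    simp only [map_zero, LinearMap.zero_apply, sub_zero] at this
    exact absurd this (ne_of_gt (hG₁pos e₁ hne))
  · intro e₂ h
    by_contra hne
    have hmem : ((0 : E₁), τ₂ e₂) ∈ R := by
      rw [← hR]
      refine ⟨(0, e₂), h, ?_⟩
      simp [LinearMap.prodMap_apply]
    have := hiso (0, e₂) h (0, τ₂ e₂) hmem
    simp only [map_zero, LinearMap.zero_apply, zero_sub, neg_eq_zero] at this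
    exact absurd this (ne_of_gt (hG₂pos e₂ hne))
end

section
/- Let (E₁, B₁) and (E₂, B₂) be finite-dimensional real vector spaces with nondegenerate symmetric bilinear forms, let τ₁ be a generalised metric on (E₁, B₁), and let τ₂ and τ₂' both be generalised metrics on (E₂, B₂). Let R ⊆ E₁ × E₂ be a subspace isotropic with respect to the pairing ⟨(e₁, e₂), (e₁', e₂')⟩ = B₁(e₁, e₁') − B₂(e₂, e₂') such that (τ₁ × τ₂)(R) = R and (τ₁ × τ₂')(R) = R. Then τ₂(e₂) = τ₂'(e₂) for every e₂ in the image of R under the projection E₁ × E₂ → E₂. -/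
/-- If an isotropic subspace `R ⊆ E₁ × E₂` is invariant under both `τ₁ × τ₂` and `τ₁ × τ₂'`,
for generalised metrics `τ₂, τ₂'` on `(E₂, B₂)`, then `τ₂ = τ₂'` on the image of `R` under the
second projection. -/
theorem stmt5 (E₁ E₂ : Type*) [AddCommGroup E₁] [Module ℝ E₁] [FiniteDimensional ℝ E₁]
    [AddCommGroup E₂] [Module ℝ E₂] [FiniteDimensional ℝ E₂]
    (B₁ : LinearMap.BilinForm ℝ E₁) (B₂ : LinearMap.BilinForm ℝ E₂)
    (hB₁symm : ∀ e e', B₁ e e' = B₁ e' e) (hB₁nd : LinearMap.BilinForm.Nondegenerate B₁)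
    (hB₂symm : ∀ e e', B₂ e e' = B₂ e' e) (hB₂nd : LinearMap.BilinForm.Nondegenerate B₂)
    (τ₁ : E₁ →ₗ[ℝ] E₁) (hτ₁inv : τ₁ ∘ₗ τ₁ = LinearMap.id)
    (hG₁symm : ∀ e e', B₁ e (τ₁ e') = B₁ e' (τ₁ e))
    (hG₁pos : ∀ e : E₁, e ≠ 0 → 0 < B₁ e (τ₁ e))
    (τ₂ : E₂ →ₗ[ℝ] E₂) (hτ₂inv : τ₂ ∘ₗ τ₂ = LinearMap.id)
    (hG₂symm : ∀ e e', B₂ e (τ₂ e') = B₂ e' (τ₂ e))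
    (hG₂pos : ∀ e : E₂, e ≠ 0 → 0 < B₂ e (τ₂ e))
    (τ₂' : E₂ →ₗ[ℝ] E₂) (hτ₂'inv : τ₂' ∘ₗ τ₂' = LinearMap.id)
    (hG₂'symm : ∀ e e', B₂ e (τ₂' e') = B₂ e' (τ₂' e))
    (hG₂'pos : ∀ e : E₂, e ≠ 0 → 0 < B₂ e (τ₂' e))
    (R : Submodule ℝ (E₁ × E₂))
    (hiso : ∀ x ∈ R, ∀ y ∈ R, B₁ x.1 y.1 - B₂ x.2 y.2 = 0)
    (hR : Submodule.map (τ₁.prodMap τ₂) R = R)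
    (hR' : Submodule.map (τ₁.prodMap τ₂') R = R) :
    ∀ e₂ ∈ Submodule.map (LinearMap.snd ℝ E₁ E₂) R, τ₂ e₂ = τ₂' e₂ := by
  rintro e₂ ⟨x, hx, rfl⟩
  have h1 : (τ₁.prodMap τ₂) x ∈ R := hR ▸ Submodule.mem_map_of_mem hx
  have h2 : (τ₁.prodMap τ₂') x ∈ R := hR' ▸ Submodule.mem_map_of_mem hx
  have hw : ((0 : E₁), τ₂ x.2 - τ₂' x.2) ∈ R := by
    have := R.sub_mem h1 h2
    simpa [Prod.ext_iff, sub_eq_zero] using this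
  have htw : ((0 : E₁), τ₂ (τ₂ x.2 - τ₂' x.2)) ∈ R := by
    have := hR ▸ Submodule.mem_map_of_mem hw
    simpa using this
  set v := τ₂ x.2 - τ₂' x.2 with hv
  have h0 : B₂ v (τ₂ v) = 0 := by
    have := hiso _ hw _ htw
    simpa using this
  have hve : v = 0 := by
    by_contra h
    exact absurd h0 (ne_of_gt (hG₂pos v h))
  have := sub_eq_zero.mp hve
  exact this
end

section
/- Let K₁ and K₂ be isotropic subspaces of (E, B) with dim K₁ = dim K₂. Then K₁ ∩ K₂^⊥ ⊆ K₂ if and only if K₂ ∩ K₁^⊥ ⊆ K₁; and when these equivalent conditions hold, one has the equalities K₁ ∩ K₂^⊥ = K₁ ∩ K₂ = K₁^⊥ ∩ K₂. -/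
/-!
`K₁ ∩ K₂^⊥` and `K₂ ∩ K₁^⊥` are the kernels of the pairing `K₁ × K₂ → ℝ` induced by `B`, viewed
from either side. By rank–nullity and the equality of row and column rank, their dimensions differ
by `dim K₁ - dim K₂`, so they agree. Isotropy puts `K₁ ∩ K₂` inside both kernels, and each
inclusion condition says exactly that the corresponding kernel has the dimension of `K₁ ∩ K₂`.
-/

/-- The orthogonal complement `K^⊥` of a subspace `K` with respect to `B`. -/
noncomputable def orthB {E : Type*} [AddCommGroup E] [Module ℝ E]
    (B : LinearMap.BilinForm ℝ E) (K : Submodule ℝ E) : Submodule ℝ E :=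
  LinearMap.BilinForm.orthogonal B K

open Module

namespace LinearMap

variable {K V W : Type*} [Field K] [AddCommGroup V] [Module K V] [AddCommGroup W] [Module K W]

theorem finrank_range_flip [FiniteDimensional K W] (f : V →ₗ[K] W →ₗ[K] K) :
    finrank K (range f.flip) = finrank K (range f) := by
  have hflip : f.flip = f.dualMap ∘ₗ (Module.evalEquiv K W).toLinearMap := rfl
  rw [hflip, range_comp_of_range_eq_top _ (LinearEquiv.range _),
    finrank_range_dualMap_eq_finrank_range]

theorem finrank_ker_add_finrank_eq_finrank_ker_flip_add [FiniteDimensional K V]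
    [FiniteDimensional K W] (f : V →ₗ[K] W →ₗ[K] K) :
    finrank K (ker f) + finrank K W = finrank K (ker f.flip) + finrank K V := by
  have hV := f.finrank_range_add_finrank_ker
  have hW := f.flip.finrank_range_add_finrank_ker
  rw [finrank_range_flip] at hW
  omega

end LinearMap

namespace LinearMap.BilinForm

variable {K V : Type*} [Field K] [AddCommGroup V] [Module K V]

theorem inf_orthogonal_eq_map_ker (B : LinearMap.BilinForm K V) (U W : Submodule K V) :
    U ⊓ B.orthogonal W = (ker (B.domRestrict₁₂ W U).flip).map U.subtype := by
  ext x
  simp [LinearMap.ext_iff, domRestrict₁₂_apply, and_comm]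

theorem finrank_inf_orthogonal_add_finrank [FiniteDimensional K V] (B : LinearMap.BilinForm K V)
    (U W : Submodule K V) :
    finrank K ↥(U ⊓ B.orthogonal W) + finrank K W
      = finrank K ↥(W ⊓ B.flip.orthogonal U) + finrank K U := by
  rw [inf_orthogonal_eq_map_ker, inf_orthogonal_eq_map_ker, Submodule.finrank_map_subtype_eq,
    Submodule.finrank_map_subtype_eq]
  exact finrank_ker_add_finrank_eq_finrank_ker_flip_add _

variable {B : LinearMap.BilinForm K V} {U W : Submodule K V}

theorem inf_orthogonal_le_iff_eq_inf (hW : W ≤ B.orthogonal W) :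
    U ⊓ B.orthogonal W ≤ W ↔ U ⊓ B.orthogonal W = U ⊓ W :=
  ⟨fun h => le_antisymm (le_inf inf_le_left h) (inf_le_inf_left U hW),
    fun h => h ▸ inf_le_right⟩

theorem inf_orthogonal_le_iff_finrank_eq [FiniteDimensional K V] (hW : W ≤ B.orthogonal W) :
    U ⊓ B.orthogonal W ≤ W ↔ finrank K ↥(U ⊓ B.orthogonal W) = finrank K ↥(U ⊓ W) := by
  rw [inf_orthogonal_le_iff_eq_inf hW]
  exact ⟨fun h => h ▸ rfl,
    fun h => (Submodule.eq_of_le_of_finrank_eq (inf_le_inf_left U hW) h.symm).symm⟩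

end LinearMap.BilinForm

open LinearMap.BilinForm

theorem stmt7_general (E : Type*) [AddCommGroup E] [Module ℝ E] [FiniteDimensional ℝ E]
    (B : LinearMap.BilinForm ℝ E)
    (hBsymm : ∀ e e', B e e' = B e' e)
    (K₁ K₂ : Submodule ℝ E)
    (hK₁ : K₁ ≤ orthB B K₁) (hK₂ : K₂ ≤ orthB B K₂)
    (hdim : Module.finrank ℝ K₁ = Module.finrank ℝ K₂) :
    (K₁ ⊓ orthB B K₂ ≤ K₂ ↔ K₂ ⊓ orthB B K₁ ≤ K₁) ∧
    (K₁ ⊓ orthB B K₂ ≤ K₂ →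
      K₁ ⊓ orthB B K₂ = K₁ ⊓ K₂ ∧ orthB B K₁ ⊓ K₂ = K₁ ⊓ K₂) := by
  unfold orthB at *
  have hflip : B.flip = B := LinearMap.ext₂ fun e e' => hBsymm e' e
  have hfinrank : finrank ℝ ↥(K₁ ⊓ B.orthogonal K₂) = finrank ℝ ↥(K₂ ⊓ B.orthogonal K₁) := by
    have := finrank_inf_orthogonal_add_finrank B K₁ K₂
    rw [hflip] at this
    omega
  have hiff : K₁ ⊓ B.orthogonal K₂ ≤ K₂ ↔ K₂ ⊓ B.orthogonal K₁ ≤ K₁ := by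
    rw [inf_orthogonal_le_iff_finrank_eq hK₂, inf_orthogonal_le_iff_finrank_eq hK₁, hfinrank,
      inf_comm K₂ K₁]
  refine ⟨hiff, fun h => ⟨(inf_orthogonal_le_iff_eq_inf hK₂).mp h, ?_⟩⟩
  rw [inf_comm, (inf_orthogonal_le_iff_eq_inf hK₁).mp (hiff.mp h), inf_comm]

/-- For isotropic `K₁, K₂` of equal dimension: `K₁ ∩ K₂^⊥ ⊆ K₂ ↔ K₂ ∩ K₁^⊥ ⊆ K₁`, and when
these hold, `K₁ ∩ K₂^⊥ = K₁ ∩ K₂ = K₁^⊥ ∩ K₂`. -/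
theorem stmt7 (E : Type*) [AddCommGroup E] [Module ℝ E] [FiniteDimensional ℝ E]
    (B : LinearMap.BilinForm ℝ E)
    (hBsymm : ∀ e e', B e e' = B e' e)
    (hBnd : LinearMap.BilinForm.Nondegenerate B)
    (K₁ K₂ : Submodule ℝ E)
    (hK₁ : K₁ ≤ orthB B K₁) (hK₂ : K₂ ≤ orthB B K₂)
    (hdim : Module.finrank ℝ K₁ = Module.finrank ℝ K₂) :
    (K₁ ⊓ orthB B K₂ ≤ K₂ ↔ K₂ ⊓ orthB B K₁ ≤ K₁) ∧
    (K₁ ⊓ orthB B K₂ ≤ K₂ →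
      K₁ ⊓ orthB B K₂ = K₁ ⊓ K₂ ∧ orthB B K₁ ⊓ K₂ = K₁ ⊓ K₂) :=
  stmt7_general E B hBsymm K₁ K₂ hK₁ hK₂ hdim
end

section
/- Let K₁ and K₂ be isotropic subspaces of (E, B), with quotient maps q₁ : K₁^⊥ → K₁^⊥/K₁ and q₂ : K₂^⊥ → K₂^⊥/K₂, and let L : K₁^⊥ ∩ K₂^⊥ → (K₁^⊥/K₁) × (K₂^⊥/K₂) be the linear map e ↦ (q₁(e), q₂(e)). Then the kernel of L equals K₁ ∩ K₂, and the image of L has dimension dim E − dim K₁ − dim K₂. -/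
/-- An isotropic `K`, regarded as a submodule of `K^⊥`. -/
noncomputable def Ksub {E : Type*} [AddCommGroup E] [Module ℝ E]
    (B : LinearMap.BilinForm ℝ E) (K : Submodule ℝ E) : Submodule ℝ ↥(orthB B K) :=
  Submodule.comap (orthB B K).subtype K

/-- The reduced space `K^⊥/K`. -/
abbrev Red {E : Type*} [AddCommGroup E] [Module ℝ E]
    (B : LinearMap.BilinForm ℝ E) (K : Submodule ℝ E) :=
  ↥(orthB B K) ⧸ Ksub B K

/-- The quotient map `q : K^⊥ → K^⊥/K`. -/
noncomputable def qmap {E : Type*} [AddCommGroup E] [Module ℝ E]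
    (B : LinearMap.BilinForm ℝ E) (K : Submodule ℝ E) :
    ↥(orthB B K) →ₗ[ℝ] Red B K :=
  (Ksub B K).mkQ
/-- The map `L : K₁^⊥ ∩ K₂^⊥ → (K₁^⊥/K₁) × (K₂^⊥/K₂)`, `e ↦ (q₁(e), q₂(e))`. -/
noncomputable def Lmap {E : Type*} [AddCommGroup E] [Module ℝ E]
    (B : LinearMap.BilinForm ℝ E) (K₁ K₂ : Submodule ℝ E) :
    ↥(orthB B K₁ ⊓ orthB B K₂) →ₗ[ℝ] Red B K₁ × Red B K₂ :=
  LinearMap.prod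
    (qmap B K₁ ∘ₗ Submodule.inclusion inf_le_left)
    (qmap B K₂ ∘ₗ Submodule.inclusion inf_le_right)

/-!
Since `qᵢ e = 0` exactly when `e ∈ Kᵢ`, the kernel of `L` is `K₁ ∩ K₂`. The domain
`K₁^⊥ ∩ K₂^⊥ = (K₁ + K₂)^⊥` has dimension `dim E − dim (K₁ + K₂)` by nondegeneracy, so rank–nullity
together with `dim (K₁ + K₂) + dim (K₁ ∩ K₂) = dim K₁ + dim K₂` gives the dimension of the image.
-/

namespace LinearMap.BilinForm

variable {R M : Type*} [CommSemiring R] [AddCommMonoid M] [Module R M]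

theorem orthogonal_sup (B : LinearMap.BilinForm R M) (N₁ N₂ : Submodule R M) :
    B.orthogonal (N₁ ⊔ N₂) = B.orthogonal N₁ ⊓ B.orthogonal N₂ := by
  ext e
  simp only [Submodule.mem_inf, mem_orthogonal_iff]
  constructor
  · intro h
    exact ⟨fun n hn => h n (Submodule.mem_sup_left hn),
      fun n hn => h n (Submodule.mem_sup_right hn)⟩
  · rintro ⟨h₁, h₂⟩ n hn
    obtain ⟨x, hx, y, hy, rfl⟩ := Submodule.mem_sup.1 hn
    rw [map_add, LinearMap.add_apply, h₁ x hx, h₂ y hy, add_zero]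

end LinearMap.BilinForm

section Reduction

open Module

variable {E : Type*} [AddCommGroup E] [Module ℝ E]

theorem ker_Lmap (B : LinearMap.BilinForm ℝ E) (K₁ K₂ : Submodule ℝ E) :
    LinearMap.ker (Lmap B K₁ K₂)
      = Submodule.comap (orthB B K₁ ⊓ orthB B K₂).subtype (K₁ ⊓ K₂) := by
  ext e
  simp only [LinearMap.mem_ker, Lmap, qmap, LinearMap.prod_apply, Function.prod, Prod.mk_eq_zero,
    LinearMap.comp_apply, Submodule.mkQ_apply, Submodule.Quotient.mk_eq_zero]
  rfl

theorem finrank_ker_Lmap {B : LinearMap.BilinForm ℝ E} {K₁ K₂ : Submodule ℝ E}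
    (hK₁ : K₁ ≤ orthB B K₁) (hK₂ : K₂ ≤ orthB B K₂) :
    finrank ℝ (LinearMap.ker (Lmap B K₁ K₂)) = finrank ℝ ↥(K₁ ⊓ K₂) := by
  rw [ker_Lmap]
  exact (Submodule.comapSubtypeEquivOfLe (inf_le_inf hK₁ hK₂)).finrank_eq

theorem finrank_orthB_inf_orthB [FiniteDimensional ℝ E] {B : LinearMap.BilinForm ℝ E}
    (hB : B.Nondegenerate) (K₁ K₂ : Submodule ℝ E) :
    finrank ℝ ↥(orthB B K₁ ⊓ orthB B K₂) = finrank ℝ E - finrank ℝ ↥(K₁ ⊔ K₂) := by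
  rw [orthB, orthB, ← LinearMap.BilinForm.orthogonal_sup]
  exact LinearMap.BilinForm.finrank_orthogonal hB _

end Reduction

theorem stmt9_general (E : Type*) [AddCommGroup E] [Module ℝ E] [FiniteDimensional ℝ E]
    (B : LinearMap.BilinForm ℝ E)
    (hBnd : LinearMap.BilinForm.Nondegenerate B)
    (K₁ K₂ : Submodule ℝ E)
    (hK₁ : K₁ ≤ orthB B K₁) (hK₂ : K₂ ≤ orthB B K₂) :
    LinearMap.ker (Lmap B K₁ K₂)
        = Submodule.comap (orthB B K₁ ⊓ orthB B K₂).subtype (K₁ ⊓ K₂) ∧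
    (Module.finrank ℝ ↥(LinearMap.range (Lmap B K₁ K₂)) : ℤ)
        = (Module.finrank ℝ E : ℤ) - (Module.finrank ℝ ↥K₁ : ℤ)
          - (Module.finrank ℝ ↥K₂ : ℤ) := by
  refine ⟨ker_Lmap B K₁ K₂, ?_⟩
  have rank_nullity := LinearMap.finrank_range_add_finrank_ker (Lmap B K₁ K₂)
  rw [finrank_ker_Lmap hK₁ hK₂, finrank_orthB_inf_orthB hBnd] at rank_nullity
  have sup_add_inf := Submodule.finrank_sup_add_finrank_inf_eq K₁ K₂
  have sup_le_ambient := Submodule.finrank_le (K₁ ⊔ K₂)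
  omega

/-- For isotropic `K₁, K₂`, the map `L : K₁^⊥ ∩ K₂^⊥ → (K₁^⊥/K₁) × (K₂^⊥/K₂)`,
`e ↦ (q₁(e), q₂(e))` has kernel `K₁ ∩ K₂` and image of dimension
`dim E − dim K₁ − dim K₂`. -/
theorem stmt9 (E : Type*) [AddCommGroup E] [Module ℝ E] [FiniteDimensional ℝ E]
    (B : LinearMap.BilinForm ℝ E)
    (hBsymm : ∀ e e', B e e' = B e' e)
    (hBnd : LinearMap.BilinForm.Nondegenerate B)
    (K₁ K₂ : Submodule ℝ E)
    (hK₁ : K₁ ≤ orthB B K₁) (hK₂ : K₂ ≤ orthB B K₂) :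
    LinearMap.ker (Lmap B K₁ K₂)
        = Submodule.comap (orthB B K₁ ⊓ orthB B K₂).subtype (K₁ ⊓ K₂) ∧
    (Module.finrank ℝ ↥(LinearMap.range (Lmap B K₁ K₂)) : ℤ)
        = (Module.finrank ℝ E : ℤ) - (Module.finrank ℝ ↥K₁ : ℤ)
          - (Module.finrank ℝ ↥K₂ : ℤ) :=
  stmt9_general E B hBnd K₁ K₂ hK₁ hK₂
end

section
/- Let (E₁, B₁) and (E₂, B₂) be finite-dimensional real vector spaces with nondegenerate symmetric bilinear forms, carrying generalised metrics τ₁ and τ₂ with associated positive-definite forms Gᵢ(e, e') = Bᵢ(e, τᵢ(e')) and +1-eigenspaces Vᵢ⁺ = ker(id − τᵢ). Let Φ : E₁ → E₂ be a linear isomorphism with B₂(Φ(e), Φ(e')) = B₁(e, e') for all e, e' ∈ E₁. Then the following are equivalent: (i) τ₂ ∘ Φ = Φ ∘ τ₁; (ii) G₂(Φ(e), Φ(e')) = G₁(e, e') for all e, e' ∈ E₁; (iii) Φ(V₁⁺) = V₂⁺. -/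
/-!
Write `V⁺` and `V⁻` for the `±1`-eigenspaces of a generalised metric `τ` on `(E, B)`. Symmetry of
`B` and of `G = B(·, τ ·)` makes `V⁺` and `V⁻` `B`-orthogonal, and positivity of `G` on `V⁺` makes
`V⁻` the whole `B`-orthogonal complement of `V⁺`. So an isometry of `B` mapping `V₁⁺` onto `V₂⁺`
also maps `V₁⁻` into `V₂⁻`, and hence intertwines the involutions on `E₁ = V₁⁺ ⊕ V₁⁻`.
Positivity of `G` also makes `B` nondegenerate, which turns equality of the metrics into
equality of the involutions.
-/

open LinearMap

theorem LinearMap.mem_ker_id_sub_iff {R E : Type*} [Ring R] [AddCommGroup E] [Module R E]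
    {τ : E →ₗ[R] E} {x : E} : x ∈ ker (LinearMap.id - τ) ↔ τ x = x := by
  rw [LinearMap.mem_ker, LinearMap.sub_apply, LinearMap.id_apply, sub_eq_zero, eq_comm]

theorem LinearMap.exists_fixed_add_neg_of_involutive {K E : Type*} [Field K] [CharZero K]
    [AddCommGroup E] [Module K E] {τ : E →ₗ[K] E} (hτ : Function.Involutive τ) (e : E) :
    ∃ p m, τ p = p ∧ τ m = -m ∧ p + m = e :=
  ⟨(2 : K)⁻¹ • (e + τ e), (2 : K)⁻¹ • (e - τ e),
    by rw [map_smul, map_add, hτ, add_comm],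
    by rw [map_smul, map_sub, hτ, ← smul_neg, neg_sub],
    by module⟩

theorem Submodule.map_ker_eq_of_comp_eq {R M₁ M₂ : Type*} [Ring R] [AddCommGroup M₁]
    [Module R M₁] [AddCommGroup M₂] [Module R M₂] {f₁ : M₁ →ₗ[R] M₁} {f₂ : M₂ →ₗ[R] M₂}
    (Φ : M₁ ≃ₗ[R] M₂)
    (h : f₂ ∘ₗ (Φ : M₁ →ₗ[R] M₂) = (Φ : M₁ →ₗ[R] M₂) ∘ₗ f₁) :
    (ker f₁).map (Φ : M₁ →ₗ[R] M₂) = ker f₂ := by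
  rw [Submodule.map_equiv_eq_comap_symm, ← LinearMap.ker_comp, ← Φ.symm.ker_comp f₂]
  congr 1
  ext x
  simpa using congr(Φ.symm ($h (Φ.symm x))).symm

namespace LinearMap.BilinForm

section GeneralisedMetric

variable {E : Type*} [AddCommGroup E] [Module ℝ E] {B : LinearMap.BilinForm ℝ E} {τ : E →ₗ[ℝ] E}

theorem apply_eq_zero_of_fixed_of_neg (hBsymm : ∀ e e', B e e' = B e' e)
    (hGsymm : ∀ e e', B e (τ e') = B e' (τ e)) {v w : E} (hv : τ v = v) (hw : τ w = -w) :
    B v w = 0 := by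
  have h := hGsymm v w
  rw [hw, hv, map_neg, hBsymm w v] at h
  linarith

theorem eq_zero_of_forall_apply_eq_zero_of_pos (hτ : Function.Involutive τ)
    (hGpos : ∀ e, e ≠ 0 → 0 < B e (τ e)) {d : E} (hd : ∀ x, B x d = 0) : d = 0 := by
  have hτd : τ d = 0 := by
    by_contra hne
    simpa [hτ d, hd] using hGpos (τ d) hne
  rw [← hτ d, hτd, map_zero]

theorem apply_eq_neg_of_forall_fixed_apply_eq_zero (hBsymm : ∀ e e', B e e' = B e' e)
    (hGsymm : ∀ e e', B e (τ e') = B e' (τ e)) (hτ : Function.Involutive τ)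
    (hGpos : ∀ e, e ≠ 0 → 0 < B e (τ e)) {x : E} (hx : ∀ v, τ v = v → B v x = 0) :
    τ x = -x := by
  obtain ⟨p, m, hp, hm, rfl⟩ := exists_fixed_add_neg_of_involutive hτ x
  have hBpp : B p (τ p) = 0 := by
    simpa [hp, apply_eq_zero_of_fixed_of_neg hBsymm hGsymm hp hm] using hx p hp
  have hp0 : p = 0 := by
    by_contra hne
    exact (hGpos p hne).ne' hBpp
  rw [hp0, zero_add, hm]

end GeneralisedMetric

section Isometry

variable {E₁ E₂ : Type*} [AddCommGroup E₁] [Module ℝ E₁] [AddCommGroup E₂] [Module ℝ E₂]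
  {B₁ : LinearMap.BilinForm ℝ E₁} {B₂ : LinearMap.BilinForm ℝ E₂}
  {τ₁ : E₁ →ₗ[ℝ] E₁} {τ₂ : E₂ →ₗ[ℝ] E₂} {Φ : E₁ ≃ₗ[ℝ] E₂}

theorem comp_eq_comp_iff_forall_apply (hτ₂ : Function.Involutive τ₂)
    (hG₂pos : ∀ e, e ≠ 0 → 0 < B₂ e (τ₂ e)) (hΦ : ∀ e e', B₂ (Φ e) (Φ e') = B₁ e e') :
    τ₂ ∘ₗ (Φ : E₁ →ₗ[ℝ] E₂) = (Φ : E₁ →ₗ[ℝ] E₂) ∘ₗ τ₁ ↔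
      ∀ e e', B₂ (Φ e) (τ₂ (Φ e')) = B₁ e (τ₁ e') := by
  constructor
  · intro h e e'
    rw [← hΦ]
    exact congr_arg (B₂ (Φ e)) (LinearMap.congr_fun h e')
  · intro h
    ext e'
    rw [LinearMap.comp_apply, LinearMap.comp_apply, LinearEquiv.coe_coe, ← sub_eq_zero]
    refine eq_zero_of_forall_apply_eq_zero_of_pos hτ₂ hG₂pos fun x => ?_
    rw [← Φ.apply_symm_apply x, map_sub, h, hΦ, sub_self]

theorem comp_eq_comp_of_map_ker_eq (hB₁symm : ∀ e e', B₁ e e' = B₁ e' e)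
    (hG₁symm : ∀ e e', B₁ e (τ₁ e') = B₁ e' (τ₁ e)) (hτ₁ : Function.Involutive τ₁)
    (hB₂symm : ∀ e e', B₂ e e' = B₂ e' e) (hG₂symm : ∀ e e', B₂ e (τ₂ e') = B₂ e' (τ₂ e))
    (hτ₂ : Function.Involutive τ₂) (hG₂pos : ∀ e, e ≠ 0 → 0 < B₂ e (τ₂ e))
    (hΦ : ∀ e e', B₂ (Φ e) (Φ e') = B₁ e e')
    (h : (ker (LinearMap.id - τ₁)).map (Φ : E₁ →ₗ[ℝ] E₂) = ker (LinearMap.id - τ₂)) :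
    τ₂ ∘ₗ (Φ : E₁ →ₗ[ℝ] E₂) = (Φ : E₁ →ₗ[ℝ] E₂) ∘ₗ τ₁ := by
  have map_fixed {p : E₁} (hp : τ₁ p = p) : τ₂ (Φ p) = Φ p := by
    rw [← mem_ker_id_sub_iff, ← h]
    exact Submodule.mem_map_of_mem (mem_ker_id_sub_iff.2 hp)
  have map_neg {m : E₁} (hm : τ₁ m = -m) : τ₂ (Φ m) = -Φ m := by
    refine apply_eq_neg_of_forall_fixed_apply_eq_zero hB₂symm hG₂symm hτ₂ hG₂pos fun v hv => ?_
    obtain ⟨w, hw, rfl⟩ : v ∈ (ker (LinearMap.id - τ₁)).map (Φ : E₁ →ₗ[ℝ] E₂) :=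
      h ▸ mem_ker_id_sub_iff.2 hv
    rw [LinearEquiv.coe_coe, hΦ]
    exact apply_eq_zero_of_fixed_of_neg hB₁symm hG₁symm (mem_ker_id_sub_iff.1 hw) hm
  ext e
  obtain ⟨p, m, hp, hm, rfl⟩ := exists_fixed_add_neg_of_involutive hτ₁ e
  simp [map_fixed hp, map_neg hm, hp, hm]

end Isometry

end LinearMap.BilinForm

theorem stmt15_general (E₁ E₂ : Type*) [AddCommGroup E₁] [Module ℝ E₁]
    [AddCommGroup E₂] [Module ℝ E₂]
    (B₁ : LinearMap.BilinForm ℝ E₁) (B₂ : LinearMap.BilinForm ℝ E₂)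
    (hB₁symm : ∀ e e', B₁ e e' = B₁ e' e)
    (hB₂symm : ∀ e e', B₂ e e' = B₂ e' e)
    (τ₁ : E₁ →ₗ[ℝ] E₁) (hτ₁inv : τ₁ ∘ₗ τ₁ = LinearMap.id)
    (hG₁symm : ∀ e e', B₁ e (τ₁ e') = B₁ e' (τ₁ e))
    (τ₂ : E₂ →ₗ[ℝ] E₂) (hτ₂inv : τ₂ ∘ₗ τ₂ = LinearMap.id)
    (hG₂symm : ∀ e e', B₂ e (τ₂ e') = B₂ e' (τ₂ e))
    (hG₂pos : ∀ e : E₂, e ≠ 0 → 0 < B₂ e (τ₂ e))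
    (Φ : E₁ ≃ₗ[ℝ] E₂)
    (hΦ : ∀ e e' : E₁, B₂ (Φ e) (Φ e') = B₁ e e') :
    ((τ₂ ∘ₗ (Φ : E₁ →ₗ[ℝ] E₂) = (Φ : E₁ →ₗ[ℝ] E₂) ∘ₗ τ₁) ↔
        (∀ e e' : E₁, B₂ (Φ e) (τ₂ (Φ e')) = B₁ e (τ₁ e'))) ∧
    ((τ₂ ∘ₗ (Φ : E₁ →ₗ[ℝ] E₂) = (Φ : E₁ →ₗ[ℝ] E₂) ∘ₗ τ₁) ↔
        Submodule.map (Φ : E₁ →ₗ[ℝ] E₂) (LinearMap.ker (LinearMap.id - τ₁))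
          = LinearMap.ker (LinearMap.id - τ₂)) := by
  have hτ₁ : Function.Involutive τ₁ := LinearMap.congr_fun hτ₁inv
  have hτ₂ : Function.Involutive τ₂ := LinearMap.congr_fun hτ₂inv
  refine ⟨LinearMap.BilinForm.comp_eq_comp_iff_forall_apply hτ₂ hG₂pos hΦ,
    fun h => Submodule.map_ker_eq_of_comp_eq Φ ?_,
    LinearMap.BilinForm.comp_eq_comp_of_map_ker_eq hB₁symm hG₁symm hτ₁ hB₂symm hG₂symm hτ₂
      hG₂pos hΦ⟩
  rw [LinearMap.sub_comp, LinearMap.comp_sub, h, LinearMap.id_comp, LinearMap.comp_id]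

/-- Equivalent characterisations of a classical generalised isometry: intertwining the
involutions, isometry of the associated metrics, matching of the `+1`-eigenspaces. -/
theorem stmt15 (E₁ E₂ : Type*) [AddCommGroup E₁] [Module ℝ E₁] [FiniteDimensional ℝ E₁]
    [AddCommGroup E₂] [Module ℝ E₂] [FiniteDimensional ℝ E₂]
    (B₁ : LinearMap.BilinForm ℝ E₁) (B₂ : LinearMap.BilinForm ℝ E₂)
    (hB₁symm : ∀ e e', B₁ e e' = B₁ e' e) (hB₁nd : LinearMap.BilinForm.Nondegenerate B₁)
    (hB₂symm : ∀ e e', B₂ e e' = B₂ e' e) (hB₂nd : LinearMap.BilinForm.Nondegenerate B₂)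
    (τ₁ : E₁ →ₗ[ℝ] E₁) (hτ₁inv : τ₁ ∘ₗ τ₁ = LinearMap.id)
    (hG₁symm : ∀ e e', B₁ e (τ₁ e') = B₁ e' (τ₁ e))
    (hG₁pos : ∀ e : E₁, e ≠ 0 → 0 < B₁ e (τ₁ e))
    (τ₂ : E₂ →ₗ[ℝ] E₂) (hτ₂inv : τ₂ ∘ₗ τ₂ = LinearMap.id)
    (hG₂symm : ∀ e e', B₂ e (τ₂ e') = B₂ e' (τ₂ e))
    (hG₂pos : ∀ e : E₂, e ≠ 0 → 0 < B₂ e (τ₂ e))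
    (Φ : E₁ ≃ₗ[ℝ] E₂)
    (hΦ : ∀ e e' : E₁, B₂ (Φ e) (Φ e') = B₁ e e') :
    ((τ₂ ∘ₗ (Φ : E₁ →ₗ[ℝ] E₂) = (Φ : E₁ →ₗ[ℝ] E₂) ∘ₗ τ₁) ↔
        (∀ e e' : E₁, B₂ (Φ e) (τ₂ (Φ e')) = B₁ e (τ₁ e'))) ∧
    ((τ₂ ∘ₗ (Φ : E₁ →ₗ[ℝ] E₂) = (Φ : E₁ →ₗ[ℝ] E₂) ∘ₗ τ₁) ↔
        Submodule.map (Φ : E₁ →ₗ[ℝ] E₂) (LinearMap.ker (LinearMap.id - τ₁))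
          = LinearMap.ker (LinearMap.id - τ₂)) :=
  stmt15_general E₁ E₂ B₁ B₂ hB₁symm hB₂symm τ₁ hτ₁inv hG₁symm τ₂ hτ₂inv hG₂symm hG₂pos Φ hΦ
end

section
/- Let K₁ and K₂ be isotropic subspaces of (E, B) with dim K₁ = dim K₂ and K₁ ∩ K₂^⊥ ⊆ K₂, and let q₁ : K₁^⊥ → K₁^⊥/K₁ be the quotient map. Then there exists a linear map s₀ : K₁^⊥/K₁ → K₁^⊥ with q₁ ∘ s₀ = id and range(s₀) ⊆ K₂^⊥; moreover, for any two such maps s₀ and s₀', the range of s₀ − s₀' is contained in K₁ ∩ K₂. -/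
open Module LinearMap.BilinForm

section QuotientSection

variable {R M : Type*} [Ring R] [AddCommGroup M] [Module R M]

lemma Submodule.exists_mkQ_comp_eq_id_of_isCompl {p q : Submodule R M} (h : IsCompl p q) :
    ∃ s : (M ⧸ p) →ₗ[R] M, p.mkQ ∘ₗ s = LinearMap.id ∧ ∀ x, s x ∈ q :=
  ⟨q.subtype ∘ₗ (p.quotientEquivOfIsCompl q h).toLinearMap,
    LinearMap.ext (Submodule.mk_quotientEquivOfIsCompl_apply h), fun _ => Subtype.coe_prop _⟩

lemma Submodule.sub_mem_of_mkQ_comp_eq_id {p : Submodule R M} {s s' : (M ⧸ p) →ₗ[R] M}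
    (hs : p.mkQ ∘ₗ s = LinearMap.id) (hs' : p.mkQ ∘ₗ s' = LinearMap.id) (x : M ⧸ p) :
    s x - s' x ∈ p := by
  rw [← Submodule.Quotient.mk_eq_zero, Submodule.Quotient.mk_sub]
  exact sub_eq_zero.mpr ((LinearMap.congr_fun hs x).trans (LinearMap.congr_fun hs' x).symm)

lemma Submodule.codisjoint_comap_subtype {P A C : Submodule R M} (h : P ⊓ A ⊔ P ⊓ C = P) :
    Codisjoint (A.comap P.subtype) (C.comap P.subtype) := by
  rw [codisjoint_iff]
  apply Submodule.map_injective_of_injective P.injective_subtype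
  rw [Submodule.map_sup, Submodule.map_comap_subtype, Submodule.map_comap_subtype,
    Submodule.map_subtype_top, h]

end QuotientSection

lemma Submodule.exists_mkQ_comp_eq_id_of_codisjoint {K V : Type*} [DivisionRing K]
    [AddCommGroup V] [Module K V] {p q : Submodule K V} (h : Codisjoint p q) :
    ∃ s : (V ⧸ p) →ₗ[K] V, p.mkQ ∘ₗ s = LinearMap.id ∧ ∀ x, s x ∈ q := by
  obtain ⟨W, hWq, hW⟩ := h.symm.exists_isCompl
  obtain ⟨s, hs, hsW⟩ := Submodule.exists_mkQ_comp_eq_id_of_isCompl hW.symm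
  exact ⟨s, hs, fun x => hWq (hsW x)⟩

section Orthogonal

variable {E : Type*} [AddCommGroup E] [Module ℝ E] {B : LinearMap.BilinForm ℝ E}

lemma orthB_sup (K L : Submodule ℝ E) : orthB B (K ⊔ L) = orthB B K ⊓ orthB B L := by
  refine le_antisymm (le_inf (orthogonal_le le_sup_left) (orthogonal_le le_sup_right)) ?_
  rintro x ⟨hxK, hxL⟩ _ hy
  obtain ⟨a, ha, b, hb, rfl⟩ := Submodule.mem_sup.mp hy
  simp only [map_add, LinearMap.add_apply, hxK a ha, hxL b hb, add_zero]

variable [FiniteDimensional ℝ E]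

lemma finrank_add_finrank_orthB (hB : B.Nondegenerate) (K : Submodule ℝ E) :
    finrank ℝ K + finrank ℝ (orthB B K) = finrank ℝ E := by
  have := K.finrank_le
  rw [orthB, finrank_orthogonal hB]
  omega

lemma orthB_orthB (hB : B.Nondegenerate) (hB' : B.IsRefl) (K : Submodule ℝ E) :
    orthB B (orthB B K) = K :=
  orthogonal_orthogonal hB hB' K

lemma orthB_injective (hB : B.Nondegenerate) (hB' : B.IsRefl) :
    Function.Injective (orthB B) := fun K L h => by
  rw [← orthB_orthB hB hB' K, h, orthB_orthB hB hB']

lemma finrank_inf_orthB_add_finrank (hB : B.Nondegenerate) (hB' : B.IsRefl)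
    (K L : Submodule ℝ E) :
    finrank ℝ ↥(L ⊓ orthB B K) + finrank ℝ K =
      finrank ℝ ↥(K ⊓ orthB B L) + finrank ℝ L := by
  have hsup := Submodule.finrank_sup_add_finrank_inf_eq (orthB B L) K
  have hL := finrank_add_finrank_orthB hB L
  have hsupOrth := finrank_add_finrank_orthB hB (orthB B L ⊔ K)
  rw [orthB_sup, orthB_orthB hB hB'] at hsupOrth
  rw [inf_comm] at hsup
  omega

variable {K₁ K₂ : Submodule ℝ E}

lemma inf_orthB_le_of_inf_orthB_le (hB : B.Nondegenerate) (hB' : B.IsRefl)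
    (hK₁ : K₁ ≤ orthB B K₁)
    (hdim : finrank ℝ K₁ = finrank ℝ K₂) (hcond : K₁ ⊓ orthB B K₂ ≤ K₂) :
    K₂ ⊓ orthB B K₁ ≤ K₁ := by
  have hle : K₁ ⊓ K₂ ≤ K₂ ⊓ orthB B K₁ := fun x hx => ⟨hx.2, hK₁ hx.1⟩
  have hfin : finrank ℝ ↥(K₂ ⊓ orthB B K₁) ≤ finrank ℝ ↥(K₁ ⊓ K₂) :=
    calc finrank ℝ ↥(K₂ ⊓ orthB B K₁) = finrank ℝ ↥(K₁ ⊓ orthB B K₂) := by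
          have := finrank_inf_orthB_add_finrank hB hB' K₁ K₂
          omega
      _ ≤ finrank ℝ ↥(K₁ ⊓ K₂) := Submodule.finrank_mono (le_inf inf_le_left hcond)
  rw [← Submodule.eq_of_le_of_finrank_le hle hfin]
  exact inf_le_left

lemma sup_inf_orthB_eq_orthB (hB : B.Nondegenerate) (hB' : B.IsRefl) (hK₁ : K₁ ≤ orthB B K₁)
    (h : K₂ ⊓ orthB B K₁ ≤ K₁) :
    K₁ ⊔ orthB B K₁ ⊓ orthB B K₂ = orthB B K₁ := by
  apply orthB_injective hB hB'
  rw [orthB_sup K₁, ← orthB_sup K₁ K₂, orthB_orthB hB hB', orthB_orthB hB hB', inf_comm,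
    sup_inf_assoc_of_le K₂ hK₁]
  exact sup_eq_left.mpr h

end Orthogonal

theorem stmt17_general (E : Type*) [AddCommGroup E] [Module ℝ E] [FiniteDimensional ℝ E]
    (B : LinearMap.BilinForm ℝ E)
    (hBsymm : ∀ e e', B e e' = B e' e)
    (hBnd : LinearMap.BilinForm.Nondegenerate B)
    (K₁ K₂ : Submodule ℝ E)
    (hK₁ : K₁ ≤ orthB B K₁)
    (hdim : Module.finrank ℝ K₁ = Module.finrank ℝ K₂)
    (hcond : K₁ ⊓ orthB B K₂ ≤ K₂) :
    (∃ s₀ : Red B K₁ →ₗ[ℝ] ↥(orthB B K₁),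
        qmap B K₁ ∘ₗ s₀ = LinearMap.id ∧ ∀ x, ((s₀ x : ↥(orthB B K₁)) : E) ∈ orthB B K₂) ∧
    (∀ s₀ s₀' : Red B K₁ →ₗ[ℝ] ↥(orthB B K₁),
        qmap B K₁ ∘ₗ s₀ = LinearMap.id →
        (∀ x, ((s₀ x : ↥(orthB B K₁)) : E) ∈ orthB B K₂) →
        qmap B K₁ ∘ₗ s₀' = LinearMap.id →
        (∀ x, ((s₀' x : ↥(orthB B K₁)) : E) ∈ orthB B K₂) →
        ∀ x, ((s₀ x - s₀' x : ↥(orthB B K₁)) : E) ∈ K₁ ⊓ K₂) := by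
  have hBrefl : B.IsRefl := fun x y h => by rwa [hBsymm]
  have hdecomp : K₁ ⊔ orthB B K₁ ⊓ orthB B K₂ = orthB B K₁ :=
    sup_inf_orthB_eq_orthB hBnd hBrefl hK₁
      (inf_orthB_le_of_inf_orthB_le hBnd hBrefl hK₁ hdim hcond)
  have hcod : Codisjoint (Ksub B K₁) ((orthB B K₂).comap (orthB B K₁).subtype) :=
    Submodule.codisjoint_comap_subtype (by rwa [inf_eq_right.mpr hK₁])
  refine ⟨Submodule.exists_mkQ_comp_eq_id_of_codisjoint hcod, ?_⟩
  intro s s' hs hsK₂ hs' hs'K₂ x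
  have hK₁mem : ((s x - s' x : orthB B K₁) : E) ∈ K₁ :=
    Submodule.sub_mem_of_mkQ_comp_eq_id hs hs' x
  exact ⟨hK₁mem, hcond ⟨hK₁mem, sub_mem (hsK₂ x) (hs'K₂ x)⟩⟩

/-- If `K₁ ∩ K₂^⊥ ⊆ K₂` for isotropic `K₁, K₂` of equal dimension, there is a splitting
`s₀ : K₁^⊥/K₁ → K₁^⊥` with image in `K₂^⊥`, unique up to elements of `K₁ ∩ K₂`. -/
theorem stmt17 (E : Type*) [AddCommGroup E] [Module ℝ E] [FiniteDimensional ℝ E]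
    (B : LinearMap.BilinForm ℝ E)
    (hBsymm : ∀ e e', B e e' = B e' e)
    (hBnd : LinearMap.BilinForm.Nondegenerate B)
    (K₁ K₂ : Submodule ℝ E)
    (hK₁ : K₁ ≤ orthB B K₁) (hK₂ : K₂ ≤ orthB B K₂)
    (hdim : Module.finrank ℝ K₁ = Module.finrank ℝ K₂)
    (hcond : K₁ ⊓ orthB B K₂ ≤ K₂) :
    (∃ s₀ : Red B K₁ →ₗ[ℝ] ↥(orthB B K₁),
        qmap B K₁ ∘ₗ s₀ = LinearMap.id ∧ ∀ x, ((s₀ x : ↥(orthB B K₁)) : E) ∈ orthB B K₂) ∧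
    (∀ s₀ s₀' : Red B K₁ →ₗ[ℝ] ↥(orthB B K₁),
        qmap B K₁ ∘ₗ s₀ = LinearMap.id →
        (∀ x, ((s₀ x : ↥(orthB B K₁)) : E) ∈ orthB B K₂) →
        qmap B K₁ ∘ₗ s₀' = LinearMap.id →
        (∀ x, ((s₀' x : ↥(orthB B K₁)) : E) ∈ orthB B K₂) →
        ∀ x, ((s₀ x - s₀' x : ↥(orthB B K₁)) : E) ∈ K₁ ⊓ K₂) :=
  stmt17_general E B hBsymm hBnd K₁ K₂ hK₁ hdim hcond
end

section
/- Let K₁ and K₂ be isotropic subspaces of (E, B), with induced nondegenerate symmetric forms B̄₁ on K₁^⊥/K₁ and B̄₂ on K₂^⊥/K₂, and let R = {(q₁(e), q₂(e)) : e ∈ K₁^⊥ ∩ K₂^⊥} ⊆ (K₁^⊥/K₁) × (K₂^⊥/K₂). If there exist generalised metrics τ̄₁ on (K₁^⊥/K₁, B̄₁) and τ̄₂ on (K₂^⊥/K₂, B̄₂) such that (τ̄₁ × τ̄₂)(R) = R, then K₁ ∩ K₂^⊥ ⊆ K₂ and K₂ ∩ K₁^⊥ ⊆ K₁. -/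
/-!
Take `e ∈ K₁ ∩ K₂^⊥`, so `e ∈ K₁^⊥ ∩ K₂^⊥` and `x := q₂(e)` is defined. Invariance of `R`
yields `e' ∈ K₁^⊥ ∩ K₂^⊥` with `q₂(e') = τ̄₂ x`, hence `B̄₂(x, τ̄₂ x) = B(e, e') = 0` because
`e ∈ K₁` and `e' ∈ K₁^⊥`. Positivity of the generalised metric forces `x = 0`, i.e. `e ∈ K₂`.
The other inclusion is the same argument with the roles exchanged.
-/

section Reduction

variable {E : Type*} [AddCommGroup E] [Module ℝ E] {B : LinearMap.BilinForm ℝ E}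
  {K : Submodule ℝ E}

theorem qmap_eq_zero_iff {e : orthB B K} : qmap B K e = 0 ↔ (e : E) ∈ K :=
  Submodule.Quotient.mk_eq_zero _

theorem mem_of_apply_eq_zero_of_qmap_eq {Bbar : LinearMap.BilinForm ℝ (Red B K)}
    (hBbar : ∀ e e' : orthB B K, Bbar (qmap B K e) (qmap B K e') = B e e')
    {τ : Red B K →ₗ[ℝ] Red B K} (hτpos : ∀ x, x ≠ 0 → 0 < Bbar x (τ x))
    {e e' : orthB B K} (he' : qmap B K e' = τ (qmap B K e)) (hB : B e e' = 0) :
    (e : E) ∈ K := by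
  have hzero : Bbar (qmap B K e) (τ (qmap B K e)) = 0 := by rw [← he', hBbar, hB]
  rw [← qmap_eq_zero_iff]
  by_contra hne
  exact (hτpos _ hne).ne' hzero

end Reduction

theorem stmt18_general (E : Type*) [AddCommGroup E] [Module ℝ E]
    (B : LinearMap.BilinForm ℝ E)
    (K₁ K₂ : Submodule ℝ E)
    (hK₁ : K₁ ≤ orthB B K₁) (hK₂ : K₂ ≤ orthB B K₂)
    (Bbar₁ : LinearMap.BilinForm ℝ (Red B K₁))
    (hBbar₁ : ∀ e e' : ↥(orthB B K₁),
      Bbar₁ (qmap B K₁ e) (qmap B K₁ e') = B (e : E) (e' : E))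
    (Bbar₂ : LinearMap.BilinForm ℝ (Red B K₂))
    (hBbar₂ : ∀ e e' : ↥(orthB B K₂),
      Bbar₂ (qmap B K₂ e) (qmap B K₂ e') = B (e : E) (e' : E))
    (τ₁ : Red B K₁ →ₗ[ℝ] Red B K₁)
    (hG₁pos : ∀ x : Red B K₁, x ≠ 0 → 0 < Bbar₁ x (τ₁ x))
    (τ₂ : Red B K₂ →ₗ[ℝ] Red B K₂)
    (hG₂pos : ∀ x : Red B K₂, x ≠ 0 → 0 < Bbar₂ x (τ₂ x))
    (hR : Submodule.map (τ₁.prodMap τ₂) (LinearMap.range (Lmap B K₁ K₂))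
      = LinearMap.range (Lmap B K₁ K₂)) :
    K₁ ⊓ orthB B K₂ ≤ K₂ ∧ K₂ ⊓ orthB B K₁ ≤ K₁ := by
  have invariant (e : ↥(orthB B K₁ ⊓ orthB B K₂)) :
      ∃ e', Lmap B K₁ K₂ e' = τ₁.prodMap τ₂ (Lmap B K₁ K₂ e) :=
    hR.le (Submodule.mem_map_of_mem (LinearMap.mem_range_self _ e))
  constructor
  · rintro e ⟨he₁, he₂⟩
    obtain ⟨e', he'⟩ := invariant ⟨e, hK₁ he₁, he₂⟩
    exact mem_of_apply_eq_zero_of_qmap_eq (e := ⟨e, he₂⟩) (e' := ⟨e', e'.2.2⟩) hBbar₂ hG₂pos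
      (congrArg Prod.snd he') (e'.2.1 e he₁)
  · rintro e ⟨he₂, he₁⟩
    obtain ⟨e', he'⟩ := invariant ⟨e, he₁, hK₂ he₂⟩
    exact mem_of_apply_eq_zero_of_qmap_eq (e := ⟨e, he₁⟩) (e' := ⟨e', e'.2.1⟩) hBbar₁ hG₁pos
      (congrArg Prod.fst he') (e'.2.2 e he₂)

/-- If the fibrewise T-duality relation `R` is invariant under a product of generalised metrics
on the reductions, then `K₁ ∩ K₂^⊥ ⊆ K₂` and `K₂ ∩ K₁^⊥ ⊆ K₁`. -/
theorem stmt18 (E : Type*) [AddCommGroup E] [Module ℝ E] [FiniteDimensional ℝ E]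
    (B : LinearMap.BilinForm ℝ E)
    (hBsymm : ∀ e e', B e e' = B e' e)
    (hBnd : LinearMap.BilinForm.Nondegenerate B)
    (K₁ K₂ : Submodule ℝ E)
    (hK₁ : K₁ ≤ orthB B K₁) (hK₂ : K₂ ≤ orthB B K₂)
    (Bbar₁ : LinearMap.BilinForm ℝ (Red B K₁))
    (hBbar₁ : ∀ e e' : ↥(orthB B K₁),
      Bbar₁ (qmap B K₁ e) (qmap B K₁ e') = B (e : E) (e' : E))
    (Bbar₂ : LinearMap.BilinForm ℝ (Red B K₂))
    (hBbar₂ : ∀ e e' : ↥(orthB B K₂),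
      Bbar₂ (qmap B K₂ e) (qmap B K₂ e') = B (e : E) (e' : E))
    (τ₁ : Red B K₁ →ₗ[ℝ] Red B K₁) (hτ₁inv : τ₁ ∘ₗ τ₁ = LinearMap.id)
    (hG₁symm : ∀ x y, Bbar₁ x (τ₁ y) = Bbar₁ y (τ₁ x))
    (hG₁pos : ∀ x : Red B K₁, x ≠ 0 → 0 < Bbar₁ x (τ₁ x))
    (τ₂ : Red B K₂ →ₗ[ℝ] Red B K₂) (hτ₂inv : τ₂ ∘ₗ τ₂ = LinearMap.id)
    (hG₂symm : ∀ x y, Bbar₂ x (τ₂ y) = Bbar₂ y (τ₂ x))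
    (hG₂pos : ∀ x : Red B K₂, x ≠ 0 → 0 < Bbar₂ x (τ₂ x))
    (hR : Submodule.map (τ₁.prodMap τ₂) (LinearMap.range (Lmap B K₁ K₂))
      = LinearMap.range (Lmap B K₁ K₂)) :
    K₁ ⊓ orthB B K₂ ≤ K₂ ∧ K₂ ⊓ orthB B K₁ ≤ K₁ :=
  stmt18_general E B K₁ K₂ hK₁ hK₂ Bbar₁ hBbar₁ Bbar₂ hBbar₂ τ₁ hG₁pos τ₂ hG₂pos hR
end
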